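/- Let n be a positive integer, 0 ≤ p ≤ n, and let α, β, γ be complex numbers with Re(α) > 0, Re(β) > 0, Re(γ) ≥ 0 and Re(α+β+2(n-1)γ) < 1. Then the Dotsenko–Fateev integral satisfies the transformation S_{n,p}(α,β,γ) = S_{n,n-p}(1-α-β-2(n-1)γ, β, γ). -/

import Mathlib

open MeasureTheory Complex Finset

/-- The Dotsenko–Fateev integral `S_{n,p}(α,β,γ)`: the first `p` variables range over
`[0,1]` and the remaining `n-p` variables over `[1,∞)`; complex powers of positive real
numbers are taken with the principal branch. -/
noncomputable def dotsenkoFateevIntegral (n p : ℕ) (α β γ : ℂ) : ℂ :=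
  ∫ t : Fin n → ℝ in
      Set.univ.pi fun i : Fin n => if (i : ℕ) < p then Set.Icc (0:ℝ) 1 else Set.Ici (1:ℝ),
    (∏ i, ((t i : ℂ) ^ (α - 1) * ((|1 - t i| : ℝ) : ℂ) ^ (β - 1))) *
      ∏ i, ∏ j ∈ Finset.Ioi i, ((|t i - t j| : ℝ) : ℂ) ^ (2 * γ)

/-!
The substitution `tᵢ ↦ tᵢ⁻¹` exchanges `(0,1]` and `[1,∞)` and has Jacobian `∏ tᵢ⁻²`. Since
`|1 - t⁻¹| = |1 - t| / t` and `|tᵢ⁻¹ - tⱼ⁻¹| = |tᵢ - tⱼ| / (tᵢ tⱼ)`, and each `tᵢ` occurs in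
`n - 1` pair factors, all powers of `tᵢ` collect into one, turning the exponent `α` into
`1 - α - β - 2(n-1)γ`. The integrand is symmetric in the variables, so reversing their order
brings the `n - p` variables that now range over `(0,1]` to the front.
-/

namespace Finset

variable {ι M : Type*} [Fintype ι] [LinearOrder ι] [CommMonoid M]

theorem prod_prod_Ioi_mul_eq_prod_pow [LocallyFiniteOrderTop ι] [LocallyFiniteOrderBot ι]
    (A : ι → M) : ∏ i, ∏ j ∈ Ioi i, A i * A j = ∏ i, A i ^ (Fintype.card ι - 1) := by
  classical
  rw [prod_prod_Ioi_mul_eq_prod_prod_off_diag (fun j i => A i)]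
  simp [prod_const, card_compl]

theorem prod_prod_Ioi_comp_perm [LocallyFiniteOrderTop ι] (f : ι → ι → M)
    (hf : ∀ i j, f i j = f j i) (σ : Equiv.Perm ι) :
    ∏ i, ∏ j ∈ Ioi i, f (σ i) (σ j) = ∏ i, ∏ j ∈ Ioi i, f i j := by
  let sort (τ : Equiv.Perm ι) (x : Σ _ : ι, ι) : Σ _ : ι, ι :=
    if τ x.1 < τ x.2 then ⟨τ x.1, τ x.2⟩ else ⟨τ x.2, τ x.1⟩
  rw [prod_sigma', prod_sigma']
  refine prod_nbij' (sort σ) (sort σ.symm) ?_ ?_ ?_ ?_ ?_ <;> rintro ⟨a, b⟩ hab <;>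
    simp only [mem_sigma, mem_univ, mem_Ioi, true_and, sort] at hab ⊢ <;>
    split_ifs <;> grind [Equiv.apply_eq_iff_eq, Equiv.symm_apply_apply, Equiv.apply_symm_apply]

end Finset

namespace Complex

theorem ofReal_inv_cpow {x : ℝ} (hx : 0 ≤ x) (s : ℂ) : ((x⁻¹ : ℝ) : ℂ) ^ s = (x : ℂ) ^ (-s) := by
  rw [ofReal_inv, inv_cpow_ofReal_nonneg hx, cpow_neg]

theorem ofReal_abs_inv_sub_inv_cpow {x y : ℝ} (hx : 0 < x) (hy : 0 < y) (s : ℂ) :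
    ((|x⁻¹ - y⁻¹| : ℝ) : ℂ) ^ s = ((|x - y| : ℝ) : ℂ) ^ s * ((x : ℂ) ^ (-s) * (y : ℂ) ^ (-s)) := by
  have : |x⁻¹ - y⁻¹| = |x - y| * (x * y)⁻¹ := by
    rw [inv_sub_inv hx.ne' hy.ne', abs_div, abs_sub_comm, abs_of_pos (mul_pos hx hy), div_eq_mul_inv]
  rw [this, ofReal_mul, mul_cpow_ofReal_nonneg (abs_nonneg _) (by positivity),
    ofReal_inv_cpow (by positivity), ofReal_mul, mul_cpow_ofReal_nonneg hx.le hy.le]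

theorem ofReal_abs_one_sub_inv_cpow {x : ℝ} (hx : 0 < x) (s : ℂ) :
    ((|1 - x⁻¹| : ℝ) : ℂ) ^ s = ((|1 - x| : ℝ) : ℂ) ^ s * (x : ℂ) ^ (-s) := by
  simpa [inv_one] using ofReal_abs_inv_sub_inv_cpow one_pos hx s

theorem inv_sq_mul_cpow_inv_mul_pow {x : ℝ} (hx : 0 < x) (a b c : ℂ) (k : ℕ) :
    ((x : ℂ) ^ 2)⁻¹ * (((x⁻¹ : ℝ) : ℂ) ^ (-a - b - k * c) * ((|1 - x⁻¹| : ℝ) : ℂ) ^ (b - 1)) *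
        ((x : ℂ) ^ (-c)) ^ k = (x : ℂ) ^ (a - 1) * ((|1 - x| : ℝ) : ℂ) ^ (b - 1) := by
  have hx' : (x : ℂ) ≠ 0 := ofReal_ne_zero.2 hx.ne'
  rw [ofReal_inv_cpow hx.le, ofReal_abs_one_sub_inv_cpow hx, ← cpow_nat_mul,
    ← cpow_natCast (x : ℂ) 2, ← cpow_neg]
  have : -(2 : ℕ) + -(-a - b - k * c) + -(b - 1) + (k : ℂ) * -c = a - 1 := by push_cast; ring
  rw [← this, cpow_add _ _ hx', cpow_add _ _ hx', cpow_add _ _ hx']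
  ring

end Complex

noncomputable def dotsenkoFateevIntegrand (n : ℕ) (α β γ : ℂ) (t : Fin n → ℝ) : ℂ :=
  (∏ i, ((t i : ℂ) ^ (α - 1) * ((|1 - t i| : ℝ) : ℂ) ^ (β - 1))) *
    ∏ i, ∏ j ∈ Finset.Ioi i, ((|t i - t j| : ℝ) : ℂ) ^ (2 * γ)

theorem dotsenkoFateevIntegrand_comp_perm (n : ℕ) (α β γ : ℂ) (σ : Equiv.Perm (Fin n))
    (t : Fin n → ℝ) :
    dotsenkoFateevIntegrand n α β γ (t ∘ σ) = dotsenkoFateevIntegrand n α β γ t := by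
  unfold dotsenkoFateevIntegrand
  congr 1
  · exact Equiv.prod_comp σ fun i => (t i : ℂ) ^ (α - 1) * ((|1 - t i| : ℝ) : ℂ) ^ (β - 1)
  · exact prod_prod_Ioi_comp_perm (fun i j => ((|t i - t j| : ℝ) : ℂ) ^ (2 * γ))
      (fun i j => by rw [abs_sub_comm]) σ

theorem inv_sq_smul_dotsenkoFateevIntegrand_inv (n : ℕ) (α β γ : ℂ) {x : Fin n → ℝ}
    (hx : ∀ i, 0 < x i) :
    (∏ i, (x i ^ 2)⁻¹) • dotsenkoFateevIntegrand n (1 - α - β - 2 * ((n : ℂ) - 1) * γ) β γ x⁻¹ =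
      dotsenkoFateevIntegrand n α β γ x := by
  have hfactor : ∀ i, (x i : ℂ) ^ (α - 1) * ((|1 - x i| : ℝ) : ℂ) ^ (β - 1) =
      ((x i : ℂ) ^ 2)⁻¹ * ((((x i)⁻¹ : ℝ) : ℂ) ^ (1 - α - β - 2 * ((n : ℂ) - 1) * γ - 1) *
        ((|1 - (x i)⁻¹| : ℝ) : ℂ) ^ (β - 1)) * ((x i : ℂ) ^ (-(2 * γ))) ^ (n - 1) := by
    intro i
    have : 1 - α - β - 2 * ((n : ℂ) - 1) * γ - 1 = -α - β - ((n - 1 : ℕ) : ℂ) * (2 * γ) := by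
      rw [Nat.cast_sub i.pos]; push_cast; ring
    rw [this, inv_sq_mul_cpow_inv_mul_pow (hx i)]
  have hpair : ∏ i, ∏ j ∈ Ioi i, ((|(x i)⁻¹ - (x j)⁻¹| : ℝ) : ℂ) ^ (2 * γ) =
      (∏ i, ∏ j ∈ Ioi i, ((|x i - x j| : ℝ) : ℂ) ^ (2 * γ)) *
        ∏ i, ((x i : ℂ) ^ (-(2 * γ))) ^ (n - 1) := by
    have hcollect := prod_prod_Ioi_mul_eq_prod_pow fun i => (x i : ℂ) ^ (-(2 * γ))
    rw [Fintype.card_fin] at hcollect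
    rw [← hcollect, ← prod_mul_distrib]
    exact prod_congr rfl fun i _ => by
      rw [← prod_mul_distrib]
      exact prod_congr rfl fun j _ => ofReal_abs_inv_sub_inv_cpow (hx i) (hx j) (2 * γ)
  have hjac : ((∏ i, (x i ^ 2)⁻¹ : ℝ) : ℂ) = ∏ i, ((x i : ℂ) ^ 2)⁻¹ := by push_cast; rfl
  unfold dotsenkoFateevIntegrand
  simp only [Pi.inv_apply]
  rw [real_smul, hjac, hpair, prod_congr rfl fun i _ => hfactor i]
  simp only [prod_mul_distrib]
  ring

theorem Set.image_inv_Ici_one {K : Type*} [Field K] [LinearOrder K] [IsStrictOrderedRing K] :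
    Inv.inv '' Set.Ici (1 : K) = Set.Ioc 0 1 := by
  ext y
  simp [Set.image_inv_eq_inv, one_le_inv_iff₀]

theorem Set.image_inv_Ioc_zero_one {K : Type*} [Field K] [LinearOrder K] [IsStrictOrderedRing K] :
    Inv.inv '' Set.Ioc (0 : K) 1 = Set.Ici 1 := by
  rw [← Set.image_inv_Ici_one, Set.image_inv_eq_inv, Set.image_inv_eq_inv, inv_inv]

theorem image_inv_univ_pi_ite {ι : Type*} (P : ι → Prop) [DecidablePred P] :
    Inv.inv '' Set.univ.pi (fun i => if P i then Set.Ioc (0 : ℝ) 1 else Set.Ici 1) =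
      Set.univ.pi fun i => if P i then Set.Ici 1 else Set.Ioc 0 1 := by
  rw [show (Inv.inv : (ι → ℝ) → ι → ℝ) = Pi.map fun _ => Inv.inv from rfl,
    Set.piMap_image_univ_pi]
  congr! 2 with i
  split_ifs
  exacts [Set.image_inv_Ioc_zero_one, Set.image_inv_Ici_one]

theorem univ_pi_ite_Icc_ae_eq_Ioc {ι : Type*} [Fintype ι] (P : ι → Prop) [DecidablePred P]
    (a b : ℝ) (B : Set ℝ) :
    Set.univ.pi (fun i => if P i then Set.Icc a b else B) =ᵐ[volume]
      Set.univ.pi fun i => if P i then Set.Ioc a b else B := by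
  refine Measure.ae_eq_set_pi fun i _ => ?_
  split_ifs
  exacts [Ioc_ae_eq_Icc.symm, .rfl]

theorem integral_image_inv_pi {ι E : Type*} [Fintype ι] [NormedAddCommGroup E] [NormedSpace ℝ E]
    {s : Set (ι → ℝ)} (hs : MeasurableSet s) (h0 : ∀ x ∈ s, ∀ i, x i ≠ 0) (g : (ι → ℝ) → E) :
    ∫ x in Inv.inv '' s, g x = ∫ x in s, (∏ i, (x i ^ 2)⁻¹) • g x⁻¹ := by
  classical
  let f' (x : ι → ℝ) : (ι → ℝ) →L[ℝ] ι → ℝ := .pi fun i =>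
    (ContinuousLinearMap.toSpanSingleton ℝ (-(x i ^ 2)⁻¹)).comp (.proj i)
  have hf' : ∀ x ∈ s, HasFDerivWithinAt Inv.inv (f' x) s x := fun x hx =>
    (hasFDerivAt_pi.2 fun i => (hasDerivAt_inv (h0 x hx i)).hasFDerivAt.comp x
      (hasFDerivAt_apply i x)).hasFDerivWithinAt
  rw [integral_image_eq_integral_abs_det_fderiv_smul volume hs hf' inv_injective.injOn]
  refine setIntegral_congr_fun hs fun x _ => ?_
  simp [f', ContinuousLinearMap.det_pi, abs_prod]

theorem setIntegral_univ_pi_comp_perm {ι α E : Type*} [Fintype ι] [MeasureSpace α]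
    [SigmaFinite (volume : Measure α)] [NormedAddCommGroup E] [NormedSpace ℝ E]
    (σ : Equiv.Perm ι) (s : ι → Set α) {g : (ι → α) → E} (hg : ∀ x, g (x ∘ σ) = g x) :
    ∫ x in Set.univ.pi (fun i => s (σ i)), g x = ∫ x in Set.univ.pi s, g x := by
  have hσ := (volume_measurePreserving_piCongrLeft (fun _ => α) σ).setIntegral_preimage_emb
    (MeasurableEquiv.measurableEmbedding _) g (Set.univ.pi s)
  have hg' : ∀ x, g (Equiv.piCongrLeft (fun _ => α) σ x) = g x := fun x => by
    rw [← hg]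
    exact congrArg g (funext (Equiv.piCongrLeft_apply_apply (fun _ => α) σ x))
  rwa [MeasurableEquiv.coe_piCongrLeft, Equiv.piCongrLeft_preimage_univ_pi,
    funext hg'] at hσ

theorem setIntegral_dotsenkoFateevIntegrand_inv (n : ℕ) (P : Fin n → Prop) [DecidablePred P]
    (α β γ : ℂ) :
    ∫ x in Set.univ.pi (fun i => if P i then Set.Ioc (0 : ℝ) 1 else Set.Ici 1),
        dotsenkoFateevIntegrand n α β γ x =
      ∫ x in Set.univ.pi (fun i => if P i then Set.Ici 1 else Set.Ioc (0 : ℝ) 1),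
        dotsenkoFateevIntegrand n (1 - α - β - 2 * ((n : ℂ) - 1) * γ) β γ x := by
  set D := Set.univ.pi fun i => if P i then Set.Ioc (0 : ℝ) 1 else Set.Ici 1
  have hD : MeasurableSet D := MeasurableSet.univ_pi fun i => by
    split_ifs
    exacts [measurableSet_Ioc, measurableSet_Ici]
  have hpos : ∀ x ∈ D, ∀ i, 0 < x i := fun x hx i => by
    have hxi : x i ∈ if P i then Set.Ioc (0 : ℝ) 1 else Set.Ici 1 := hx i trivial
    split_ifs at hxi
    exacts [hxi.1, one_pos.trans_le hxi]
  rw [← image_inv_univ_pi_ite, integral_image_inv_pi hD fun x hx i => (hpos x hx i).ne']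
  exact setIntegral_congr_fun hD fun x hx =>
    (inv_sq_smul_dotsenkoFateevIntegrand_inv n α β γ (hpos x hx)).symm

theorem setIntegral_dotsenkoFateevIntegrand_rev (n p : ℕ) (α β γ : ℂ) :
    ∫ x in Set.univ.pi (fun i : Fin n => if (i : ℕ) < p then Set.Ici 1 else Set.Ioc (0 : ℝ) 1),
        dotsenkoFateevIntegrand n α β γ x =
      ∫ x in Set.univ.pi (fun i : Fin n => if (i : ℕ) < n - p then Set.Ioc (0 : ℝ) 1
        else Set.Ici 1), dotsenkoFateevIntegrand n α β γ x := by
  have hrev : (fun i : Fin n => if (i : ℕ) < p then Set.Ici 1 else Set.Ioc (0 : ℝ) 1) =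
      fun i => if (Fin.revPerm i : ℕ) < n - p then Set.Ioc 0 1 else Set.Ici 1 := by
    funext i
    simp only [Fin.revPerm_apply, Fin.val_rev]
    split_ifs <;> first | rfl | omega
  rw [hrev]
  exact setIntegral_univ_pi_comp_perm Fin.revPerm
    (fun i => if (i : ℕ) < n - p then Set.Ioc 0 1 else Set.Ici 1)
    (dotsenkoFateevIntegrand_comp_perm n α β γ Fin.revPerm)

theorem dotsenko_fateev_transformation_general (n p : ℕ) (α β γ : ℂ) :
    dotsenkoFateevIntegral n p α β γ =
      dotsenkoFateevIntegral n (n - p) (1 - α - β - 2 * ((n : ℂ) - 1) * γ) β γ := by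
  calc dotsenkoFateevIntegral n p α β γ
      = ∫ x in Set.univ.pi (fun i : Fin n => if (i : ℕ) < p then Set.Ioc 0 1 else Set.Ici 1),
          dotsenkoFateevIntegrand n α β γ x :=
        setIntegral_congr_set (univ_pi_ite_Icc_ae_eq_Ioc _ _ _ _)
    _ = ∫ x in Set.univ.pi (fun i : Fin n => if (i : ℕ) < p then Set.Ici 1 else Set.Ioc 0 1),
          dotsenkoFateevIntegrand n (1 - α - β - 2 * ((n : ℂ) - 1) * γ) β γ x :=
        setIntegral_dotsenkoFateevIntegrand_inv n _ α β γ
    _ = ∫ x in Set.univ.pi (fun i : Fin n => if (i : ℕ) < n - p then Set.Ioc 0 1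
            else Set.Ici 1), dotsenkoFateevIntegrand n (1 - α - β - 2 * ((n : ℂ) - 1) * γ) β γ x :=
        setIntegral_dotsenkoFateevIntegrand_rev n p _ β γ
    _ = dotsenkoFateevIntegral n (n - p) (1 - α - β - 2 * ((n : ℂ) - 1) * γ) β γ :=
        (setIntegral_congr_set (univ_pi_ite_Icc_ae_eq_Ioc _ _ _ _)).symm

theorem dotsenko_fateev_transformation (n p : ℕ) (hn : 0 < n) (hp : p ≤ n)
    (α β γ : ℂ) (hα : 0 < α.re) (hβ : 0 < β.re) (hγ : 0 ≤ γ.re)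
    (h1 : (α + β + 2 * ((n : ℂ) - 1) * γ).re < 1) :
    dotsenkoFateevIntegral n p α β γ =
      dotsenkoFateevIntegral n (n - p) (1 - α - β - 2 * ((n : ℂ) - 1) * γ) β γ :=
  dotsenko_fateev_transformation_general n p α β γ
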